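/- Let K ⊂ ℝⁿ be a closed convex set containing the origin in its interior. Then for every x ∈ ℝⁿ, sup_{y ∈ K̂} ⟨x,y⟩ = sup_{y ∈ K̂ ∩ ext(K*)} ⟨x,y⟩, where ext(K*) is the set of extreme points of K*. -/

import Mathlib

/-!
If `y ∈ K̂` and `⟪x₀, y⟫ = 1` with `x₀ ∈ K`, then `y` lies in the face `F` of `K*` on which
`⟪x₀, ·⟫` attains its maximum `1`, and `F ⊆ K̂`. As `0 ∈ interior K`, the polar `K*` is compact,
hence so is `F`; so `⟪x, ·⟫` attains its maximum over `F` at an extreme point of `F`, which is an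
extreme point of `K*` too. Thus every value `⟪x, y⟫` with `y ∈ K̂` is dominated by one taken on
`K̂ ∩ ext K*`.
-/

open RealInnerProductSpace

variable {n : ℕ}

/-- The polar of a set `K`. -/
def polar (K : Set (EuclideanSpace ℝ (Fin n))) : Set (EuclideanSpace ℝ (Fin n)) :=
  {y | ∀ x ∈ K, ⟪x, y⟫ ≤ 1}

/-- The set `K̂` of points of the polar attaining value 1 on `K`. -/
def hatK (K : Set (EuclideanSpace ℝ (Fin n))) : Set (EuclideanSpace ℝ (Fin n)) :=
  {y ∈ polar K | ∃ x ∈ K, ⟪x, y⟫ = 1}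

/-- A function is sublinear if it is convex and positively homogeneous. -/
def IsSublinear (σ : EuclideanSpace ℝ (Fin n) → ℝ) : Prop :=
  ConvexOn ℝ Set.univ σ ∧ ∀ t : ℝ, 0 < t → ∀ x, σ (t • x) = t * σ x

/-- The recession cone of `K`. -/
def recCone (K : Set (EuclideanSpace ℝ (Fin n))) : Set (EuclideanSpace ℝ (Fin n)) :=
  {x ∈ K | ∀ t : ℝ, 0 < t → t • x ∈ K}

/-- The support function of a set `T`, as `x ↦ sup_{y ∈ T} ⟪x, y⟫`. -/
noncomputable def suppFn (T : Set (EuclideanSpace ℝ (Fin n)))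
    (x : EuclideanSpace ℝ (Fin n)) : ℝ :=
  sSup ((fun y => ⟪x, y⟫) '' T)

theorem IsCompact.exists_mem_extremePoints_le {E : Type*} [AddCommGroup E] [Module ℝ E]
    [TopologicalSpace E] [T2Space E] [IsTopologicalAddGroup E] [ContinuousSMul ℝ E]
    [LocallyConvexSpace ℝ E] {s : Set E} (hs : IsCompact s) {y : E} (hy : y ∈ s)
    (l : StrongDual ℝ E) : ∃ z ∈ s.extremePoints ℝ, l y ≤ l z := by
  have hexp : IsExposed ℝ s (l.toExposed s) := ContinuousLinearMap.toExposed.isExposed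
  obtain ⟨w, hws, hwmax⟩ := hs.exists_isMaxOn ⟨y, hy⟩ l.continuous.continuousOn
  obtain ⟨z, hz⟩ := (hexp.isCompact hs).extremePoints_nonempty ⟨w, hws, fun v hv => hwmax hv⟩
  exact ⟨z, hexp.isExtreme.extremePoints_subset_extremePoints hz, hz.1.2 y hy⟩

theorem isClosed_polar (K : Set (EuclideanSpace ℝ (Fin n))) : IsClosed (polar K) := by
  have hpolar : polar K = ⋂ x ∈ K, {y | ⟪x, y⟫ ≤ 1} := by
    ext y
    simp [polar]
  rw [hpolar]
  exact isClosed_biInter fun x _ => isClosed_le (innerSL ℝ x).continuous continuous_const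

theorem norm_le_inv_of_mem_polar {K : Set (EuclideanSpace ℝ (Fin n))} {r : ℝ} (hr : 0 < r)
    (hK : Metric.closedBall 0 r ⊆ K) {y : EuclideanSpace ℝ (Fin n)} (hy : y ∈ polar K) :
    ‖y‖ ≤ r⁻¹ := by
  rcases eq_or_ne y 0 with rfl | hy0
  · simpa using hr.le
  have hny : 0 < ‖y‖ := norm_pos_iff.mpr hy0
  have hmem : (r / ‖y‖) • y ∈ K :=
    hK (by simp [norm_smul, abs_of_pos hr, hny.ne'])
  have hle : r * ‖y‖ ≤ 1 := by
    simpa [real_inner_smul_left, real_inner_self_eq_norm_sq, hny.ne', pow_two, div_mul_eq_mul_div,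
      mul_div_assoc] using hy _ hmem
  rwa [le_inv_comm₀ hny hr, inv_eq_one_div, le_div_iff₀ hny]

theorem isCompact_polar {K : Set (EuclideanSpace ℝ (Fin n))} (h0 : 0 ∈ interior K) :
    IsCompact (polar K) := by
  obtain ⟨r, hr, hball⟩ := Metric.nhds_basis_closedBall.mem_iff.mp (mem_interior_iff_mem_nhds.mp h0)
  refine (isCompact_closedBall 0 r⁻¹).of_isClosed_subset (isClosed_polar K) fun y hy => ?_
  simpa using norm_le_inv_of_mem_polar hr hball hy

theorem exists_mem_hatK_inter_extremePoints_inner_le {K : Set (EuclideanSpace ℝ (Fin n))}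
    (hcomp : IsCompact (polar K)) {y : EuclideanSpace ℝ (Fin n)} (hy : y ∈ hatK K)
    (x : EuclideanSpace ℝ (Fin n)) :
    ∃ z ∈ hatK K ∩ Set.extremePoints ℝ (polar K), ⟪x, y⟫ ≤ ⟪x, z⟫ := by
  obtain ⟨hyK, x₀, hx₀, hx₀y⟩ := hy
  set F := (innerSL ℝ x₀).toExposed (polar K)
  have hexp : IsExposed ℝ (polar K) F := ContinuousLinearMap.toExposed.isExposed
  have hyF : y ∈ F := ⟨hyK, fun w hw => by simpa [hx₀y] using hw x₀ hx₀⟩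
  obtain ⟨z, hz, hle⟩ := (hexp.isCompact hcomp).exists_mem_extremePoints_le hyF (innerSL ℝ x)
  have hzF : z ∈ F := hz.1
  have hx₀z : ⟪x₀, z⟫ = 1 :=
    le_antisymm (hzF.1 x₀ hx₀) (by simpa [hx₀y] using hzF.2 y hyK)
  exact ⟨z, ⟨⟨hzF.1, x₀, hx₀, hx₀z⟩, hexp.isExtreme.extremePoints_subset_extremePoints hz⟩,
    by simpa using hle⟩

theorem stmt6_general (K : Set (EuclideanSpace ℝ (Fin n)))
    (h0 : (0 : EuclideanSpace ℝ (Fin n)) ∈ interior K) :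
    ∀ x, suppFn (hatK K) x = suppFn (hatK K ∩ Set.extremePoints ℝ (polar K)) x := by
  intro x
  refine csSup_eq_csSup_of_forall_exists_le ?_ ?_
  · rintro _ ⟨y, hy, rfl⟩
    obtain ⟨z, hz, hle⟩ := exists_mem_hatK_inter_extremePoints_inner_le (isCompact_polar h0) hy x
    exact ⟨_, ⟨z, hz, rfl⟩, hle⟩
  · rintro _ ⟨y, hy, rfl⟩
    exact ⟨_, ⟨y, hy.1, rfl⟩, le_rfl⟩

theorem stmt6 (K : Set (EuclideanSpace ℝ (Fin n)))
    (hKcl : IsClosed K) (hKconv : Convex ℝ K) (h0 : (0 : EuclideanSpace ℝ (Fin n)) ∈ interior K) :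
    ∀ x, suppFn (hatK K) x = suppFn (hatK K ∩ Set.extremePoints ℝ (polar K)) x :=
  stmt6_general K h0
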